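/- arXiv:2605.09861 — 3 statements merged into one kernel-verified Lean document; each statement's English description precedes it below -/
import Mathlib

section
/- Let V, U ⊆ ℝ^d be linear subspaces with orthogonal projectors P_V, P_U. Then tr(P_V P_U) ≤ min(dim V, dim U), and equality holds if and only if V ⊆ U or U ⊆ V. -/
open Matrix

lemma frob {d : ℕ} (X : Matrix (Fin d) (Fin d) ℝ) :
    (X * Xᵀ).trace = ∑ i, ∑ j, X i j ^ 2 := by
  simp [Matrix.trace, Matrix.mul_apply, Matrix.diag, sq]

lemma frob_nonneg {d : ℕ} (X : Matrix (Fin d) (Fin d) ℝ) : 0 ≤ (X * Xᵀ).trace := by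
  rw [frob]; positivity

lemma frob_eq_zero {d : ℕ} (X : Matrix (Fin d) (Fin d) ℝ) (h : (X * Xᵀ).trace = 0) :
    X = 0 := by
  rw [frob] at h
  ext i j
  have h1 := (Finset.sum_eq_zero_iff_of_nonneg (fun i _ => by positivity)).mp h i (Finset.mem_univ i)
  have h2 := (Finset.sum_eq_zero_iff_of_nonneg (fun j _ => by positivity)).mp h1 j (Finset.mem_univ j)
  simpa using (pow_eq_zero_iff two_ne_zero).mp h2

lemma trace_proj {d : ℕ} (P : Matrix (Fin d) (Fin d) ℝ) (V : Submodule ℝ (Fin d → ℝ))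
    (h2 : P * P = P) (h3 : LinearMap.range P.mulVecLin = V) :
    P.trace = (Module.finrank ℝ V : ℝ) := by
  have hproj : LinearMap.IsProj V P.mulVecLin := by
    constructor
    · intro x; rw [← h3]; exact LinearMap.mem_range_self _ x
    · intro x hx
      rw [← h3] at hx
      obtain ⟨y, rfl⟩ := hx
      have : (P * P).mulVecLin y = P.mulVecLin y := by rw [h2]
      simpa [Matrix.mulVecLin_mul] using this
  have ht := hproj.trace
  rw [LinearMap.trace_eq_matrix_trace ℝ (Pi.basisFun ℝ (Fin d)),
    LinearMap.toMatrix_eq_toMatrix'] at ht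
  rw [← ht]
  congr 1
  rw [← Matrix.toLin'_apply' P, LinearMap.toMatrix'_toLin']

lemma key {d : ℕ} (P Q : Matrix (Fin d) (Fin d) ℝ)
    (hPs : P.IsSymm) (hPi : P * P = P) (hQs : Q.IsSymm) (hQi : Q * Q = Q) :
    (P * Q).trace ≤ P.trace ∧ ((P * Q).trace = P.trace ↔ P * Q = P) := by
  set X := P - P * Q with hX
  have hPQQ : P * Q * Q = P * Q := by rw [Matrix.mul_assoc, hQi]
  have hXX : X * Xᵀ = P - P * Q * P := by
    rw [hX]
    simp only [Matrix.transpose_sub, Matrix.transpose_mul, hPs.eq, hQs.eq]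
    simp only [sub_mul, mul_sub, ← Matrix.mul_assoc, hPi, hPQQ, sub_self, sub_zero]
  have htr : (X * Xᵀ).trace = P.trace - (P * Q).trace := by
    rw [hXX, Matrix.trace_sub]
    congr 1
    rw [Matrix.mul_assoc, Matrix.trace_mul_comm P (Q * P), Matrix.mul_assoc, hPi,
      Matrix.trace_mul_comm Q P]
  have hnn := frob_nonneg X
  rw [htr] at hnn
  refine ⟨by linarith, ?_, ?_⟩
  · intro h
    have h0 : (X * Xᵀ).trace = 0 := by rw [htr, h]; ring
    have hz := frob_eq_zero X h0
    rw [hX] at hz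
    exact (sub_eq_zero.mp hz).symm
  · intro h; rw [h]

lemma swap_lemma {d : ℕ} (P Q : Matrix (Fin d) (Fin d) ℝ)
    (hPs : P.IsSymm) (hQs : Q.IsSymm) : P * Q = P ↔ Q * P = P := by
  constructor <;> intro h <;>
    · have := congrArg Matrix.transpose h
      rwa [Matrix.transpose_mul, hPs.eq, hQs.eq] at this

lemma nest_lemma {d : ℕ} (P Q : Matrix (Fin d) (Fin d) ℝ) (V U : Submodule ℝ (Fin d → ℝ))
    (hQi : Q * Q = Q) (hPr : LinearMap.range P.mulVecLin = V)
    (hQr : LinearMap.range Q.mulVecLin = U) : V ≤ U ↔ Q * P = P := by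
  constructor
  · intro h
    apply Matrix.toLin'.injective
    rw [Matrix.toLin'_apply' (Q * P), Matrix.toLin'_apply' P]
    apply LinearMap.ext
    intro x
    rw [Matrix.mulVecLin_mul]
    show Q.mulVecLin (P.mulVecLin x) = P.mulVecLin x
    have hmem : P.mulVecLin x ∈ U := h (hPr ▸ LinearMap.mem_range_self _ x)
    rw [← hQr] at hmem
    obtain ⟨y, hy⟩ := hmem
    rw [← hy]
    have : (Q * Q).mulVecLin y = Q.mulVecLin (Q.mulVecLin y) := by
      rw [Matrix.mulVecLin_mul]; rfl
    rw [← this, hQi]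
  · intro h v hv
    rw [← hPr] at hv
    obtain ⟨x, rfl⟩ := hv
    rw [← hQr]
    refine ⟨P.mulVecLin x, ?_⟩
    have : (Q * P).mulVecLin x = Q.mulVecLin (P.mulVecLin x) := by
      rw [Matrix.mulVecLin_mul]; rfl
    rw [← this, h]

/-- `P` is the orthogonal projector (symmetric idempotent matrix) onto the
subspace `V ⊆ ℝ^d`, i.e. its column space is `V`. -/
def IsOrthProj {d : ℕ} (P : Matrix (Fin d) (Fin d) ℝ)
    (V : Submodule ℝ (Fin d → ℝ)) : Prop :=
  P.IsSymm ∧ P * P = P ∧ LinearMap.range P.mulVecLin = V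

/-- `tr(P_V P_U) ≤ min(dim V, dim U)`, with equality iff `V ⊆ U` or `U ⊆ V`. -/
theorem stmt2 {d : ℕ} (V U : Submodule ℝ (Fin d → ℝ))
    (P Q : Matrix (Fin d) (Fin d) ℝ)
    (hP : IsOrthProj P V) (hQ : IsOrthProj Q U) :
    (P * Q).trace ≤ (min (Module.finrank ℝ V) (Module.finrank ℝ U) : ℝ) ∧
    ((P * Q).trace = (min (Module.finrank ℝ V) (Module.finrank ℝ U) : ℝ) ↔
      V ≤ U ∨ U ≤ V) := by
  obtain ⟨hPs, hPi, hPr⟩ := hP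
  obtain ⟨hQs, hQi, hQr⟩ := hQ
  have hA := trace_proj P V hPi hPr
  have hB := trace_proj Q U hQi hQr
  have k1 := key P Q hPs hPi hQs hQi
  have k2 := key Q P hQs hQi hPs hPi
  have hcomm : (P * Q).trace = (Q * P).trace := Matrix.trace_mul_comm P Q
  have n1 : V ≤ U ↔ Q * P = P := nest_lemma P Q V U hQi hPr hQr
  have n2 : U ≤ V ↔ P * Q = Q := nest_lemma Q P U V hPi hQr hPr
  have s1 : P * Q = P ↔ Q * P = P := swap_lemma P Q hPs hQs
  have s2 : Q * P = Q ↔ P * Q = Q := swap_lemma Q P hQs hPs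
  constructor
  · refine le_min ?_ ?_
    · rw [← hA]; exact k1.1
    · rw [← hB, hcomm]; exact k2.1
  · constructor
    · intro h
      rcases le_total (Module.finrank ℝ V) (Module.finrank ℝ U) with hle | hle
      · left
        apply n1.mpr
        apply s1.mp
        apply k1.2.mp
        rw [h, hA]
        exact min_eq_left (Nat.cast_le.mpr hle)
      · right
        apply n2.mpr
        apply s2.mp
        apply k2.2.mp
        rw [← hcomm, h, hB]
        exact min_eq_right (Nat.cast_le.mpr hle)
    · rintro (h | h)
      · have hle : Module.finrank ℝ V ≤ Module.finrank ℝ U := Submodule.finrank_mono h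
        have ht : (P * Q).trace = P.trace := k1.2.mpr (s1.mpr (n1.mp h))
        rw [ht, hA]
        exact (min_eq_left (Nat.cast_le.mpr hle)).symm
      · have hle : Module.finrank ℝ U ≤ Module.finrank ℝ V := Submodule.finrank_mono h
        have ht : (Q * P).trace = Q.trace := k2.2.mpr (s2.mpr (n2.mp h))
        rw [hcomm, ht, hB]
        exact (min_eq_right (Nat.cast_le.mpr hle)).symm
end

section
/- Let V, U ⊆ ℝ^d be linear subspaces with dim V = r_1, dim U = r_2, r_1 ≤ r_2, and k := dim(V ∩ U) < r_1. Then there exist a subspace V' ⊆ U with dim V' = r_1 and a family of invertible linear maps g(t) ∈ GL(d, ℝ) for t ≠ 0 such that g(t)(U) = U for all t ≠ 0, and the orthogonal projectors onto g(t)(V) converge, as t → 0, to the orthogonal projector onto V'. In particular the closure of the GL(d,ℝ)-orbit of (V,U) contains a flag-compatible pair (V', U) with V' ⊆ U. -/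
open Function Matrix Module Set Submodule LinearMap

section Gram

variable {m n : Type*} [Fintype m] [Fintype n] [DecidableEq n]

theorem Matrix.isUnit_transpose_mul_self {K : Type*} [Field K] [LinearOrder K]
    [IsStrictOrderedRing K] (A : Matrix m n K) (hA : LinearIndependent K A.col) :
    IsUnit (Aᵀ * A) := by
  rw [← mulVec_injective_iff_isUnit, ← coe_mulVecLin, ← LinearMap.ker_eq_bot,
    ker_mulVecLin_transpose_mul_self, LinearMap.ker_eq_bot, coe_mulVecLin, mulVec_injective_iff]
  exact hA

noncomputable def gramProj (A : Matrix m n ℝ) : Matrix m m ℝ :=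
  A * (Aᵀ * A)⁻¹ * Aᵀ

theorem isOrthProj_gramProj {d : ℕ} (A : Matrix (Fin d) n ℝ) (hA : LinearIndependent ℝ A.col) :
    IsOrthProj (gramProj A) (span ℝ (range A.col)) := by
  have hG : IsUnit (Aᵀ * A).det :=
    (Matrix.isUnit_iff_isUnit_det _).mp (isUnit_transpose_mul_self A hA)
  have hPA : gramProj A * A = A := by
    rw [gramProj, Matrix.mul_assoc (A * _), nonsing_inv_mul_cancel_right _ _ hG]
  refine ⟨?_, ?_, ?_⟩
  · rw [Matrix.IsSymm, gramProj, transpose_mul, transpose_mul, transpose_transpose,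
      transpose_nonsing_inv, transpose_mul, transpose_transpose, Matrix.mul_assoc]
  · calc gramProj A * gramProj A = gramProj A * A * ((Aᵀ * A)⁻¹ * Aᵀ) := by
          simp only [gramProj, Matrix.mul_assoc]
      _ = gramProj A := by rw [hPA, gramProj, Matrix.mul_assoc]
  · rw [← range_mulVecLin]
    refine le_antisymm ?_ ?_
    · rw [gramProj, Matrix.mul_assoc, mulVecLin_mul]
      exact range_comp_le_range _ _
    · conv_lhs => rw [← hPA]
      rw [mulVecLin_mul]
      exact range_comp_le_range _ _

theorem continuousAt_gramProj (A : Matrix m n ℝ) (hA : LinearIndependent ℝ A.col) :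
    ContinuousAt gramProj A := by
  have hdet : (Aᵀ * A).det ≠ 0 :=
    ((Matrix.isUnit_iff_isUnit_det _).mp (isUnit_transpose_mul_self A hA)).ne_zero
  have hinv : ContinuousAt (fun B : Matrix m n ℝ => (Bᵀ * B)⁻¹) A :=
    (continuousAt_matrix_inv _ (by rw [Ring.inverse_eq_inv']; exact continuousAt_inv₀ hdet)).comp
      (continuous_id.matrix_transpose.matrix_mul continuous_id).continuousAt
  have hleft : ContinuousAt (fun B : Matrix m n ℝ => B * (Bᵀ * B)⁻¹) A :=
    (continuous_fst.matrix_mul continuous_snd).continuousAt.comp (continuousAt_id.prodMk hinv)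
  exact (continuous_fst.matrix_mul continuous_snd).continuousAt.comp
    (hleft.prodMk continuous_id.matrix_transpose.continuousAt)

theorem linearIndependent_col_of_basis_map {ι : Type*} {d : ℕ} {V : Submodule ℝ (Fin d → ℝ)}
    (b : Basis ι ℝ V) {f : (Fin d → ℝ) →ₗ[ℝ] (Fin d → ℝ)} (hf : Injective (f.domRestrict V)) :
    LinearIndependent ℝ (Matrix.of fun i j => f (b j) i).col :=
  b.linearIndependent.map' _ (LinearMap.ker_eq_bot.mpr hf)

theorem isOrthProj_gramProj_of_basis_map {d : ℕ} {V : Submodule ℝ (Fin d → ℝ)} (b : Basis n ℝ V)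
    {f : (Fin d → ℝ) →ₗ[ℝ] (Fin d → ℝ)} (hf : Injective (f.domRestrict V)) :
    IsOrthProj (gramProj (Matrix.of fun i j => f (b j) i)) (V.map f) := by
  have h := isOrthProj_gramProj _ (linearIndependent_col_of_basis_map b hf)
  have hcol : (Matrix.of fun i j => f (b j) i).col = f.domRestrict V ∘ b := rfl
  rwa [hcol, range_comp, span_image, b.span_eq, Submodule.map_top,
    LinearMap.range_domRestrict] at h

end Gram

section Shear

variable {K M : Type*} [Field K] [AddCommGroup M] [Module K M] {X C : Submodule K M}
  (h : IsCompl X C) (ψ : X →ₗ[K] C)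

noncomputable def shear (t : K) : M →ₗ[K] M :=
  ofIsCompl h (t • X.subtype + C.subtype ∘ₗ ψ) C.subtype

theorem shear_apply_left (t : K) (x : X) : shear h ψ t x = t • (x : M) + ψ x := by
  simp [shear]

theorem shear_apply_of_mem_right (t : K) {c : M} (hc : c ∈ C) : shear h ψ t c = c :=
  ofIsCompl_apply_right h ⟨c, hc⟩

theorem shear_eq_add_smul (t : K) : shear h ψ t = shear h ψ 0 + t • X.projection C h := by
  refine ofIsCompl_eq h (fun x => ?_) (fun c => ?_) <;> simp [shear, add_comm]

theorem injective_shear {t : K} (ht : t ≠ 0) : Injective (shear h ψ t) := by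
  rw [injective_iff_map_eq_zero]
  intro v hv
  obtain ⟨x, c, rfl, -⟩ := existsUnique_add_of_isCompl h v
  rw [map_add, shear_apply_left, shear_apply_of_mem_right h ψ t c.2, add_assoc] at hv
  have hx : t • (x : M) = 0 :=
    disjoint_def'.mp h.disjoint _ (X.smul_mem t x.2) _ (C.neg_mem (C.add_mem (ψ x).2 c.2))
      (eq_neg_of_add_eq_zero_left hv)
  obtain rfl : x = 0 := by simpa [ht] using hx
  simpa using hv

theorem injective_shear_zero_domRestrict {W : Submodule K M} (hWC : W ≤ C) (hψ : Injective ψ)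
    (hW : Disjoint W (range (C.subtype ∘ₗ ψ))) :
    Injective ((shear h ψ 0).domRestrict (W ⊔ X)) := by
  rw [injective_iff_map_eq_zero]
  rintro ⟨v, hv⟩ h0
  obtain ⟨w, x, rfl⟩ := mem_sup'.mp hv
  have hsum : (w : M) + ψ x = 0 := by
    simpa [shear_apply_left, shear_apply_of_mem_right h ψ 0 (hWC w.2)] using h0
  have hψx : ψ x = 0 := Subtype.ext <| disjoint_def'.mp hW.symm _ ⟨x, rfl⟩ _ (neg_mem w.2)
    (eq_neg_of_add_eq_zero_right hsum)
  obtain rfl : x = 0 := (injective_iff_map_eq_zero ψ).mp hψ x hψx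
  simpa using hsum

end Shear

theorem Submodule.finrank_sup_of_disjoint {K M : Type*} [Field K] [AddCommGroup M] [Module K M]
    [FiniteDimensional K M] {W X : Submodule K M} (h : Disjoint W X) :
    finrank K ↥(W ⊔ X) = finrank K W + finrank K X := by
  rw [← finrank_sup_add_finrank_inf_eq, h.eq_bot, finrank_bot, add_zero]

theorem exists_shear_degeneration {K M : Type*} [Field K] [AddCommGroup M] [Module K M]
    [FiniteDimensional K M] (V U : Submodule K M) (hVU : finrank K V ≤ finrank K U) :
    ∃ G₀ G₁ : M →ₗ[K] M, (∀ t : K, t ≠ 0 → Injective (G₀ + t • G₁)) ∧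
      (∀ t : K, ∀ u ∈ U, (G₀ + t • G₁) u = u) ∧
      Injective (G₀.domRestrict V) ∧ V.map G₀ ≤ U := by
  obtain ⟨X, hWX, hWXV⟩ := IsModularLattice.exists_disjoint_and_sup_eq (inf_le_left : V ⊓ U ≤ V)
  obtain ⟨Y, hWY, hWYU⟩ := IsModularLattice.exists_disjoint_and_sup_eq (inf_le_right : V ⊓ U ≤ U)
  have hYU : Y ≤ U := hWYU ▸ le_sup_right
  have hXU : Disjoint X U := by
    rw [disjoint_iff, ← inf_eq_left.mpr (hWXV ▸ le_sup_right : X ≤ V), inf_assoc]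
    exact hWX.symm.eq_bot
  obtain ⟨C, hUC, hCX⟩ := hXU.symm.exists_isCompl
  obtain ⟨e, he⟩ : ∃ e : X →ₗ[K] Y, Injective e := by
    rw [← finrank_le_iff_exists_linearMap]
    have hV := finrank_sup_of_disjoint hWX
    have hU := finrank_sup_of_disjoint hWY
    rw [hWXV] at hV
    rw [hWYU] at hU
    omega
  let ψ : X →ₗ[K] C := inclusion (hYU.trans hUC) ∘ₗ e
  refine ⟨shear hCX.symm ψ 0, X.projection C hCX.symm, fun t ht => ?_, fun t u hu => ?_, ?_, ?_⟩
  · rw [← shear_eq_add_smul]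
    exact injective_shear _ _ ht
  · rw [← shear_eq_add_smul]
    exact shear_apply_of_mem_right _ _ t (hUC hu)
  · rw [← hWXV]
    refine injective_shear_zero_domRestrict hCX.symm ψ (inf_le_right.trans hUC)
      ((Submodule.inclusion_injective (hYU.trans hUC)).comp he) (hWY.mono_right ?_)
    rintro _ ⟨x, rfl⟩
    exact (e x).2
  · rw [← hWXV, Submodule.map_sup, sup_le_iff]
    constructor
    · rintro _ ⟨w, hw, rfl⟩
      rw [shear_apply_of_mem_right _ _ _ (hUC hw.2)]
      exact hw.2
    · rintro _ ⟨x, hx, rfl⟩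
      rw [show x = ((⟨x, hx⟩ : X) : M) from rfl, shear_apply_left, zero_smul, zero_add]
      exact hYU (e _).2

theorem stmt8_general {d r1 r2 : ℕ} (h12 : r1 ≤ r2)
    (V U : Submodule ℝ (Fin d → ℝ))
    (hV : Module.finrank ℝ V = r1) (hU : Module.finrank ℝ U = r2) :
    ∃ V' : Submodule ℝ (Fin d → ℝ), V' ≤ U ∧ Module.finrank ℝ V' = r1 ∧
    ∃ g : ℝ → ((Fin d → ℝ) ≃ₗ[ℝ] (Fin d → ℝ)),
    ∃ P : ℝ → Matrix (Fin d) (Fin d) ℝ, ∃ P' : Matrix (Fin d) (Fin d) ℝ,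
      (∀ t : ℝ, t ≠ 0 →
        U.map ((g t : (Fin d → ℝ) →ₗ[ℝ] (Fin d → ℝ))) = U) ∧
      (∀ t : ℝ, t ≠ 0 →
        IsOrthProj (P t) (V.map ((g t : (Fin d → ℝ) →ₗ[ℝ] (Fin d → ℝ))))) ∧
      IsOrthProj P' V' ∧
      Filter.Tendsto P (nhdsWithin 0 {(0 : ℝ)}ᶜ) (nhds P') := by
  obtain ⟨G₀, G₁, hinj, hfix, hinj₀, hV'U⟩ := exists_shear_degeneration V U (hV ▸ hU ▸ h12)
  let g : ℝ → (Fin d → ℝ) ≃ₗ[ℝ] (Fin d → ℝ) := fun t =>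
    if ht : t = 0 then LinearEquiv.refl ℝ _ else LinearEquiv.ofInjectiveEndo _ (hinj t ht)
  have hg (t : ℝ) (ht : t ≠ 0) : (g t : (Fin d → ℝ) →ₗ[ℝ] (Fin d → ℝ)) = G₀ + t • G₁ := by
    simp only [g, dif_neg ht]
    rfl
  let b := Module.finBasis ℝ V
  let A : ℝ → Matrix (Fin d) (Fin (finrank ℝ V)) ℝ := fun t =>
    Matrix.of fun i j => (G₀ + t • G₁) (b j) i
  have hA : Continuous A := continuous_matrix fun i j => by
    simp only [A, Matrix.of_apply, LinearMap.add_apply, LinearMap.smul_apply, Pi.add_apply,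
      Pi.smul_apply, smul_eq_mul]
    fun_prop
  refine ⟨V.map G₀, hV'U, ?_, g, fun t => gramProj (A t), gramProj (A 0), fun t ht => ?_,
    fun t ht => ?_, ?_, ?_⟩
  · rw [← LinearMap.range_domRestrict, LinearMap.finrank_range_of_inj hinj₀, hV]
  · rw [hg t ht]
    exact SetLike.coe_injective ((map_coe _ U).trans (EqOn.image_eq_self (hfix t)))
  · rw [hg t ht]
    exact isOrthProj_gramProj_of_basis_map b ((hinj t ht).comp Subtype.val_injective)
  · simpa [A] using isOrthProj_gramProj_of_basis_map b hinj₀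
  · have hli₀ : LinearIndependent ℝ (A 0).col := by
      simpa [A] using linearIndependent_col_of_basis_map b hinj₀
    exact ((continuousAt_gramProj _ hli₀).comp hA.continuousAt).tendsto.mono_left
      nhdsWithin_le_nhds

/-- **One-parameter degeneration onto the flag locus (Hilbert–Mumford step).**
If `dim(V ∩ U) < dim V = r₁ ≤ dim U = r₂`, then there are a subspace `V' ⊆ U` of
dimension `r₁` and invertible maps `g t` (for `t ≠ 0`) fixing `U` such that the
orthogonal projectors onto `g t (V)` converge, as `t → 0`, to the orthogonal
projector onto `V'`; thus the closure of the orbit of `(V, U)` contains the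
flag-compatible pair `(V', U)`. -/
theorem stmt8 {d r1 r2 : ℕ} (h12 : r1 ≤ r2) (h2d : r2 ≤ d)
    (V U : Submodule ℝ (Fin d → ℝ))
    (hV : Module.finrank ℝ V = r1) (hU : Module.finrank ℝ U = r2)
    (hk : Module.finrank ℝ ↥(V ⊓ U) < r1) :
    ∃ V' : Submodule ℝ (Fin d → ℝ), V' ≤ U ∧ Module.finrank ℝ V' = r1 ∧
    ∃ g : ℝ → ((Fin d → ℝ) ≃ₗ[ℝ] (Fin d → ℝ)),
    ∃ P : ℝ → Matrix (Fin d) (Fin d) ℝ, ∃ P' : Matrix (Fin d) (Fin d) ℝ,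
      (∀ t : ℝ, t ≠ 0 →
        U.map ((g t : (Fin d → ℝ) →ₗ[ℝ] (Fin d → ℝ))) = U) ∧
      (∀ t : ℝ, t ≠ 0 →
        IsOrthProj (P t) (V.map ((g t : (Fin d → ℝ) →ₗ[ℝ] (Fin d → ℝ))))) ∧
      IsOrthProj P' V' ∧
      Filter.Tendsto P (nhdsWithin 0 {(0 : ℝ)}ᶜ) (nhds P') :=
  stmt8_general h12 V U hV hU
end

section
/- Let H ∈ ℝ^{d×n}, Y ∈ ℝ^{c×n}, λ > 0, and let P_V be the orthogonal projector onto the column space V of H. Suppose W : ℝ → ℝ^{c×d} is differentiable and satisfies the gradient-flow equation W'(t) = −(W(t)H − Y)Hᵀ − λ W(t) for all t ≥ 0. Then for all t ≥ 0, W(t)(I_d − P_V) = e^{−λ t} · W(0)(I_d − P_V); in particular ‖W(t)(I_d − P_V)‖_F = e^{−λ t} ‖W(0)(I_d − P_V)‖_F. -/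
open Matrix

attribute [local instance] Matrix.frobeniusNormedAddCommGroup Matrix.frobeniusNormedSpace

/-- The squared Frobenius norm of a real matrix: `‖A‖_F² = ∑ i j, (A i j)²`. -/
noncomputable def frobSq {m n : Type*} [Fintype m] [Fintype n]
    (A : Matrix m n ℝ) : ℝ :=
  ∑ i, ∑ j, (A i j) ^ 2

/-!
Since `P` fixes the columns of `H` and is symmetric, `Hᵀ (I - P) = 0`. Multiplying the flow
equation on the right by `I - P` therefore kills the data term, so `Z t = W t (I - P)` solves the
linear equation `Z' = -λ Z`, whose solutions are `e^{-λ t} Z 0`: the function `e^{λ t} Z t` has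
zero derivative.
-/

theorem Matrix.mul_eq_self_of_range_le {R m n : Type*} [CommRing R] [Fintype m]
    [DecidableEq m] [Fintype n] {P : Matrix m m R} (hP : P * P = P) {H : Matrix m n R}
    (hH : LinearMap.range H.mulVecLin ≤ LinearMap.range P.mulVecLin) : P * H = H := by
  refine Matrix.ext_iff_mulVec.mpr fun v => ?_
  obtain ⟨w, hw⟩ := hH ⟨v, rfl⟩
  simp only [mulVecLin_apply] at hw
  rw [← mulVec_mulVec, ← hw, mulVec_mulVec, hP]

theorem IsOrthProj.transpose_mul_one_sub_eq_zero {d n : ℕ} {H : Matrix (Fin d) (Fin n) ℝ}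
    {P : Matrix (Fin d) (Fin d) ℝ} (hP : IsOrthProj P (LinearMap.range H.mulVecLin)) :
    Hᵀ * (1 - P) = 0 := by
  obtain ⟨hsymm, hidem, hrange⟩ := hP
  have hPH : P * H = H := Matrix.mul_eq_self_of_range_le hidem hrange.ge
  rw [Matrix.mul_sub, Matrix.mul_one, ← hsymm.eq, ← transpose_mul, hPH, sub_self]

theorem HasDerivAt.matrix_mul_const {l m n : Type*} [Fintype l] [Fintype m] [Fintype n]
    {f : ℝ → Matrix l m ℝ} {f' : Matrix l m ℝ} {t : ℝ} (hf : HasDerivAt f f' t)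
    (M : Matrix m n ℝ) : HasDerivAt (fun s => f s * M) (f' * M) t :=
  (mulRightLinearMap l ℝ M).toContinuousLinearMap.hasFDerivAt.comp_hasDerivAt t hf

theorem eq_exp_mul_smul_of_hasDerivAt_smul {E : Type*} [NormedAddCommGroup E] [NormedSpace ℝ E]
    {f : ℝ → E} {a : ℝ} (hf : ∀ t, 0 ≤ t → HasDerivAt f (a • f t) t) {t : ℝ} (ht : 0 ≤ t) :
    f t = Real.exp (a * t) • f 0 := by
  set g : ℝ → E := fun s => Real.exp (-a * s) • f s
  have hg : ∀ s, 0 ≤ s → HasDerivAt g 0 s := by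
    intro s hs
    have hexp : HasDerivAt (fun s => Real.exp (-a * s)) (Real.exp (-a * s) * -a) s := by
      simpa using ((hasDerivAt_id s).const_mul (-a)).exp
    refine (hexp.smul (hf s hs)).congr_deriv ?_
    rw [smul_smul, ← add_smul, mul_neg, add_neg_cancel, zero_smul]
  have hconst := constant_of_has_deriv_right_zero
    (fun s hs => (hg s hs.1).continuousAt.continuousWithinAt)
    (fun s hs => (hg s hs.1).hasDerivWithinAt) t ⟨ht, le_rfl⟩
  have hgt : Real.exp (-a * t) • f t = f 0 := by simpa [g] using hconst
  rw [← hgt, smul_smul, ← Real.exp_add, neg_mul, add_neg_cancel, Real.exp_zero, one_smul]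

theorem frobSq_smul {m n : Type*} [Fintype m] [Fintype n] (a : ℝ) (A : Matrix m n ℝ) :
    frobSq (a • A) = a ^ 2 * frobSq A := by
  simp only [frobSq, Matrix.smul_apply, smul_eq_mul, mul_pow, Finset.mul_sum]

theorem sqrt_frobSq_smul {m n : Type*} [Fintype m] [Fintype n] (a : ℝ) (A : Matrix m n ℝ) :
    Real.sqrt (frobSq (a • A)) = |a| * Real.sqrt (frobSq A) := by
  rw [frobSq_smul, Real.sqrt_mul (sq_nonneg a), Real.sqrt_sq_eq_abs]

theorem stmt11_general {c d n : ℕ} (H : Matrix (Fin d) (Fin n) ℝ)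
    (Y : Matrix (Fin c) (Fin n) ℝ) (lam : ℝ)
    (P : Matrix (Fin d) (Fin d) ℝ)
    (hP : IsOrthProj P (LinearMap.range H.mulVecLin))
    (W : ℝ → Matrix (Fin c) (Fin d) ℝ)
    (hW : ∀ t : ℝ, 0 ≤ t → HasDerivAt W (-(W t * H - Y) * Hᵀ - lam • W t) t) :
    ∀ t : ℝ, 0 ≤ t →
      W t * ((1 : Matrix (Fin d) (Fin d) ℝ) - P)
        = Real.exp (-lam * t) • (W 0 * ((1 : Matrix (Fin d) (Fin d) ℝ) - P)) ∧
      Real.sqrt (frobSq (W t * ((1 : Matrix (Fin d) (Fin d) ℝ) - P)))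
        = Real.exp (-lam * t) *
            Real.sqrt (frobSq (W 0 * ((1 : Matrix (Fin d) (Fin d) ℝ) - P))) := by
  have hZ : ∀ t, 0 ≤ t → HasDerivAt (fun s => W s * (1 - P)) (-lam • (W t * (1 - P))) t := by
    intro t ht
    convert (hW t ht).matrix_mul_const (1 - P) using 1
    rw [Matrix.sub_mul, Matrix.mul_assoc, hP.transpose_mul_one_sub_eq_zero, Matrix.mul_zero,
      Matrix.smul_mul, zero_sub, neg_smul]
  intro t ht
  have hsol := eq_exp_mul_smul_of_hasDerivAt_smul hZ ht
  refine ⟨hsol, ?_⟩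
  rw [hsol, sqrt_frobSq_smul, abs_of_pos (Real.exp_pos _)]

/-- **Exponential Level-2 attraction.** Along the ridge gradient flow
`W'(t) = −(W(t)H − Y)Hᵀ − λ W(t)`, with `P_V` the orthogonal projector onto the
column space of `H`, one has `W(t)(I − P_V) = e^{−λt} W(0)(I − P_V)`, and in
particular `‖W(t)(I − P_V)‖_F = e^{−λt} ‖W(0)(I − P_V)‖_F`. -/
theorem stmt11 {c d n : ℕ} (H : Matrix (Fin d) (Fin n) ℝ)
    (Y : Matrix (Fin c) (Fin n) ℝ) (lam : ℝ) (hlam : 0 < lam)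
    (P : Matrix (Fin d) (Fin d) ℝ)
    (hP : IsOrthProj P (LinearMap.range H.mulVecLin))
    (W : ℝ → Matrix (Fin c) (Fin d) ℝ)
    (hW : ∀ t : ℝ, 0 ≤ t → HasDerivAt W (-(W t * H - Y) * Hᵀ - lam • W t) t) :
    ∀ t : ℝ, 0 ≤ t →
      W t * ((1 : Matrix (Fin d) (Fin d) ℝ) - P)
        = Real.exp (-lam * t) • (W 0 * ((1 : Matrix (Fin d) (Fin d) ℝ) - P)) ∧
      Real.sqrt (frobSq (W t * ((1 : Matrix (Fin d) (Fin d) ℝ) - P)))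
        = Real.exp (-lam * t) *
            Real.sqrt (frobSq (W 0 * ((1 : Matrix (Fin d) (Fin d) ℝ) - P))) :=
  stmt11_general H Y lam P hP W hW
end
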